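/- arXiv:2309.15209 — 3 statements merged into one kernel-verified Lean document; each statement's English description precedes it below -/
import Mathlib

section
/- For the step polynomial S(x,y) = x + y + 1/x + 1/y + a·x·y with a > 0, there is a unique point (x₀,y₀) ∈ (0,∞)² with ∂S/∂x(x₀,y₀) = ∂S/∂y(x₀,y₀) = 0; moreover x₀ = y₀ = k, where k ∈ (0,1) is the unique solution of a·k³ = 1 − k². -/
/-!
Setting `∂S/∂x = 1 - 1/x² + a y` and `∂S/∂y = 1 - 1/y² + a x` to zero gives
`x²(1 + a y) = 1 = y²(1 + a x)`. Subtracting, `(x - y)(x + y + a x y) = 0`, so positive critical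
points lie on the diagonal, where the equation becomes `a x³ + x² = 1`; its left side is strictly
increasing on `(0, ∞)`, so `x = k`.
-/

/-- The step polynomial `S(x,y) = x + y + 1/x + 1/y + a·x·y`. -/
noncomputable def stepPoly (a x y : ℝ) : ℝ := x + y + 1 / x + 1 / y + a * x * y

lemma stepPoly_comm (a x y : ℝ) : stepPoly a x y = stepPoly a y x := by
  unfold stepPoly
  ring

lemma hasDerivAt_stepPoly_left (a y : ℝ) {x : ℝ} (hx : x ≠ 0) :
    HasDerivAt (fun t => stepPoly a t y) (1 - 1 / x ^ 2 + a * y) x := by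
  have hinv : HasDerivAt (fun t : ℝ => 1 / t) (-(1 / x ^ 2)) x := by
    simpa [one_div] using hasDerivAt_inv hx
  exact (((((hasDerivAt_id x).add_const y).add hinv).add_const (1 / y)).add
    (((hasDerivAt_id x).const_mul a).mul_const y)).congr_deriv (by ring)

lemma deriv_stepPoly_left_eq_zero_iff (a y : ℝ) {x : ℝ} (hx : x ≠ 0) :
    deriv (fun t => stepPoly a t y) x = 0 ↔ x ^ 2 * (1 + a * y) = 1 := by
  rw [(hasDerivAt_stepPoly_left a y hx).deriv]
  field_simp
  constructor <;> intro h <;> linear_combination h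

lemma deriv_stepPoly_right_eq_zero_iff (a x : ℝ) {y : ℝ} (hy : y ≠ 0) :
    deriv (fun t => stepPoly a x t) y = 0 ↔ y ^ 2 * (1 + a * x) = 1 := by
  simp only [stepPoly_comm a x]
  exact deriv_stepPoly_left_eq_zero_iff a x hy

lemma eq_of_sq_mul_one_add_eq_one {a x y : ℝ} (ha : 0 ≤ a) (hx : 0 < x) (hy : 0 < y)
    (hxy : x ^ 2 * (1 + a * y) = 1) (hyx : y ^ 2 * (1 + a * x) = 1) : x = y := by
  have hfactor : (x - y) * (x + y + a * x * y) = 0 := by linear_combination hxy - hyx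
  have hpos : 0 < x + y + a * x * y := by positivity
  linarith [(mul_eq_zero.mp hfactor).resolve_right hpos.ne']

lemma strictMonoOn_cubic_add_sq {a : ℝ} (ha : 0 ≤ a) :
    StrictMonoOn (fun x : ℝ => a * x ^ 3 + x ^ 2) (Set.Ioi 0) := by
  rintro x (hx : 0 < x) y - hxy
  have hcube : x ^ 3 ≤ y ^ 3 := pow_le_pow_left₀ hx.le hxy.le 3
  have hsq : x ^ 2 < y ^ 2 := pow_lt_pow_left₀ hxy hx.le two_ne_zero
  dsimp only
  nlinarith [mul_le_mul_of_nonneg_left hcube ha]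

lemma stepPoly_critical_iff {a k x y : ℝ} (ha : 0 ≤ a) (hk : 0 < k)
    (hak : a * k ^ 3 = 1 - k ^ 2) (hx : 0 < x) (hy : 0 < y) :
    (deriv (fun t => stepPoly a t y) x = 0 ∧ deriv (fun t => stepPoly a x t) y = 0) ↔
      x = k ∧ y = k := by
  rw [deriv_stepPoly_left_eq_zero_iff a y hx.ne', deriv_stepPoly_right_eq_zero_iff a x hy.ne']
  constructor
  · rintro ⟨hxy, hyx⟩
    obtain rfl := eq_of_sq_mul_one_add_eq_one ha hx hy hxy hyx
    have hxk : x = k :=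
      (strictMonoOn_cubic_add_sq ha).injOn hx hk (by linear_combination hxy - hak)
    exact ⟨hxk, hxk⟩
  · rintro ⟨rfl, rfl⟩
    constructor <;> linear_combination hak

/-- For `a > 0`, the step polynomial has a unique critical point in `(0,∞)²`, namely
`(k,k)` where `k ∈ (0,1)` is the unique solution of `a k³ = 1 − k²`. -/
theorem stepPoly_unique_critical_point (a k : ℝ) (ha : 0 < a)
    (hk : k ∈ Set.Ioo (0 : ℝ) 1) (hak : a * k ^ 3 = 1 - k ^ 2) :
    (∃! p : ℝ × ℝ, (0 < p.1 ∧ 0 < p.2) ∧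
      deriv (fun x => stepPoly a x p.2) p.1 = 0 ∧
      deriv (fun y => stepPoly a p.1 y) p.2 = 0) ∧
    ((0 < k ∧ 0 < k) ∧
      deriv (fun x => stepPoly a x k) k = 0 ∧
      deriv (fun y => stepPoly a k y) k = 0) := by
  have hk0 := hk.1
  have hcrit_k := (stepPoly_critical_iff ha.le hk0 hak hk0 hk0).mpr ⟨rfl, rfl⟩
  refine ⟨⟨(k, k), ⟨⟨hk0, hk0⟩, hcrit_k⟩, ?_⟩, ⟨hk0, hk0⟩, hcrit_k⟩
  rintro p ⟨⟨hx, hy⟩, hcrit⟩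
  obtain ⟨hxk, hyk⟩ := (stepPoly_critical_iff ha.le hk0 hak hx hy).mp hcrit
  exact Prod.ext hxk hyk
end

section
/- For all integers p > ℓ ≥ 0 and m ≥ 0, there exist real constants c_{i,j} (for 1 ≤ i ≤ p − ℓ and max(m − i, 0) ≤ j ≤ m) such that, as n → ∞, (log(n+1))^m/(n+1)^ℓ = (log n)^m/n^ℓ + ∑_{i=1}^{p−ℓ} ∑_{j=max(m−i,0)}^{m} c_{i,j} (log n)^j / n^{ℓ+i} + O((log n)^m / n^{p+1}). -/
/-!
With `x = 1/n` one has `log (n + 1) = log n + log (1 + x)` and `1/(n + 1) = x (1 + x)⁻¹`, so by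
the binomial theorem
`log (n + 1)^m / (n + 1)^ℓ = x^ℓ ∑ₖ (m choose k) (log n)^(m-k) log (1 + x)^k (1 + x)^(-ℓ)`.
Multiplying the Taylor polynomials of `log (1 + x)` and `(1 + x)⁻¹` approximates each
`log (1 + x)^k (1 + x)^(-ℓ)` by a polynomial in `x` up to `O(x^(p-ℓ+1))`. The Taylor polynomial of
`log (1 + x)` is divisible by `x`, so this polynomial is divisible by `x^k`: that is why `x^i` only
meets `(log n)^j` with `j ≥ m - i`. Since `(log n)^(m-k) = O((log n)^m)`, the errors add up to
`O((log n)^m / n^(p+1))`.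
-/

open Filter Topology Asymptotics Polynomial Finset

namespace LogPowerShift

variable {𝕜 : Type*} [NormedField 𝕜]

def IsTaylorApprox (K : ℕ) (g : 𝕜 → 𝕜) (P : 𝕜[X]) : Prop :=
  (fun x => g x - P.eval x) =O[𝓝 0] fun x => x ^ (K + 1)

namespace IsTaylorApprox

variable {K : ℕ} {g h : 𝕜 → 𝕜} {P Q : 𝕜[X]}

lemma isBigO_one (hg : IsTaylorApprox K g P) : g =O[𝓝 0] fun _ => (1 : 𝕜) := by
  have hpow : (fun x : 𝕜 => x ^ (K + 1)) =O[𝓝 0] fun _ => (1 : 𝕜) :=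
    (continuous_pow (K + 1)).continuousAt.tendsto.isBigO_one 𝕜
  have hP : (fun x => P.eval x) =O[𝓝 0] fun _ => (1 : 𝕜) :=
    P.continuous.continuousAt.tendsto.isBigO_one 𝕜
  simpa using (IsBigO.trans hg hpow).add hP

lemma mul (hg : IsTaylorApprox K g P) (hh : IsTaylorApprox K h Q) :
    IsTaylorApprox K (fun x => g x * h x) (P * Q) := by
  have hQ : (fun x => Q.eval x) =O[𝓝 0] fun _ => (1 : 𝕜) :=
    Q.continuous.continuousAt.tendsto.isBigO_one 𝕜
  have key : ∀ x, g x * h x - (P * Q).eval x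
      = g x * (h x - Q.eval x) + (g x - P.eval x) * Q.eval x := by
    intro x; rw [eval_mul]; ring
  have h1 : (fun x => g x * (h x - Q.eval x)) =O[𝓝 0] fun x => x ^ (K + 1) := by
    simpa using IsBigO.mul hg.isBigO_one hh
  have h2 : (fun x => (g x - P.eval x) * Q.eval x) =O[𝓝 0] fun x => x ^ (K + 1) := by
    simpa using IsBigO.mul hg hQ
  simpa only [IsTaylorApprox, key] using h1.add h2

lemma pow (hg : IsTaylorApprox K g P) (k : ℕ) :
    IsTaylorApprox K (fun x => g x ^ k) (P ^ k) := by
  induction k with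
  | zero => simpa [IsTaylorApprox] using isBigO_zero _ _
  | succ k ih => simpa only [pow_succ] using ih.mul hg

lemma sub_sum_coeff (hg : IsTaylorApprox K g P) :
    (fun x => g x - ∑ i ∈ range (K + 1), P.coeff i * x ^ i) =O[𝓝 0] fun x => x ^ (K + 1) := by
  set d := P.natDegree + 1
  have htail : (fun x : 𝕜 => ∑ i ∈ range d, P.coeff (K + 1 + i) * x ^ i)
      =O[𝓝 0] fun _ => (1 : 𝕜) := by
    refine (Continuous.tendsto ?_ 0).isBigO_one 𝕜
    fun_prop
  have key : ∀ x, P.eval x - ∑ i ∈ range (K + 1), P.coeff i * x ^ i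
      = x ^ (K + 1) * ∑ i ∈ range d, P.coeff (K + 1 + i) * x ^ i := by
    intro x
    rw [eval_eq_sum_range' (n := K + 1 + d) (by omega), sum_range_add, add_sub_cancel_left,
      mul_sum]
    exact sum_congr rfl fun i _ => by ring
  have hP : (fun x => P.eval x - ∑ i ∈ range (K + 1), P.coeff i * x ^ i)
      =O[𝓝 0] fun x => x ^ (K + 1) := by
    simp only [key]
    simpa using (isBigO_refl (fun x : 𝕜 => x ^ (K + 1)) _).mul htail
  exact (IsBigO.add hg hP).congr (fun x => by ring) fun _ => rfl

end IsTaylorApprox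

noncomputable def invOneAddTaylor (K : ℕ) : 𝕜[X] := ∑ i ∈ range (K + 1), C ((-1) ^ i) * X ^ i

lemma isTaylorApprox_inv_one_add (K : ℕ) :
    IsTaylorApprox K (fun x : 𝕜 => (1 + x)⁻¹) (invOneAddTaylor K) := by
  have hinv : (fun x : 𝕜 => (1 + x)⁻¹) =O[𝓝 0] fun _ => (1 : 𝕜) :=
    ((continuous_const.add continuous_id).continuousAt.inv₀ (by simp)).tendsto.isBigO_one 𝕜
  have hpow : (fun x : 𝕜 => (-x) ^ (K + 1)) =O[𝓝 0] fun x => x ^ (K + 1) :=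
    isBigO_of_le _ fun x => by simp
  have key : ∀ᶠ x : 𝕜 in 𝓝 0, (-x) ^ (K + 1) * (1 + x)⁻¹
      = (1 + x)⁻¹ - (invOneAddTaylor K).eval x := by
    have hne : ∀ᶠ x : 𝕜 in 𝓝 0, 1 + x ≠ 0 :=
      ((continuous_const.add continuous_id).tendsto 0).eventually_ne (by simp)
    filter_upwards [hne] with x hx
    have hgeom := mul_neg_geom_sum (-x) (K + 1)
    simp only [invOneAddTaylor, eval_finsetSum, eval_mul, eval_C, eval_pow, eval_X]
    rw [sum_congr rfl fun i _ => (neg_pow x i).symm]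
    field_simp
    linear_combination hgeom
  unfold IsTaylorApprox
  simpa using (hpow.mul hinv).congr' key EventuallyEq.rfl

noncomputable def logOneAddTaylor (K : ℕ) : ℝ[X] :=
  X * ∑ i ∈ range K, C ((-1) ^ i / (i + 1 : ℝ)) * X ^ i

lemma isTaylorApprox_log_one_add (K : ℕ) :
    IsTaylorApprox K (fun x => Real.log (1 + x)) (logOneAddTaylor K) := by
  refine IsBigO.of_bound 2 ?_
  filter_upwards [Metric.ball_mem_nhds (0 : ℝ) one_half_pos] with x hx
  rw [Metric.mem_ball, Real.dist_eq, sub_zero] at hx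
  have hrem := Real.abs_log_sub_add_sum_range_le (x := -x) (by rw [abs_neg]; linarith) K
  have heval : Real.log (1 + x) - (logOneAddTaylor K).eval x
      = ∑ i ∈ range K, (-x) ^ (i + 1) / (i + 1) + Real.log (1 - -x) := by
    simp only [logOneAddTaylor, eval_mul, eval_finsetSum, eval_C, eval_pow, eval_X, mul_sum,
      sub_neg_eq_add, add_comm (1 : ℝ) x]
    rw [sub_eq_neg_add, ← sum_neg_distrib]
    congr 1
    refine sum_congr rfl fun i _ => ?_
    rw [neg_pow, pow_succ]
    ring
  rw [Real.norm_eq_abs, Real.norm_eq_abs, heval, abs_pow]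
  rw [abs_neg] at hrem
  refine hrem.trans ?_
  rw [div_le_iff₀ (by linarith)]
  nlinarith [pow_nonneg (abs_nonneg x) (K + 1)]

lemma isBigO_pow_pow_of_tendsto_atTop {α : Type*} {l : Filter α} {f : α → ℝ}
    (hf : Tendsto f l atTop) {j m : ℕ} (hjm : j ≤ m) :
    (fun a => f a ^ j) =O[l] fun a => f a ^ m := by
  refine IsBigO.of_bound' ?_
  filter_upwards [hf.eventually_ge_atTop 1] with a ha
  rw [Real.norm_of_nonneg (by positivity), Real.norm_of_nonneg (by positivity)]
  exact pow_le_pow_right₀ ha hjm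

lemma sum_choose_mul_sum_eq (m K : ℕ) (q : ℕ → ℕ → ℝ) (hq : ∀ k i, i < k → q k i = 0)
    (L x : ℝ) :
    ∑ k ∈ range (m + 1), m.choose k * L ^ (m - k) * ∑ i ∈ range (K + 1), q k i * x ^ i
      = q 0 0 * L ^ m + ∑ i ∈ Icc 1 K, ∑ j ∈ Icc (m - i) m,
          m.choose (m - j) * q (m - j) i * L ^ j * x ^ i := by
  have hcol : ∀ i, ∑ k ∈ range (m + 1), m.choose k * L ^ (m - k) * (q k i * x ^ i)
      = ∑ j ∈ Icc (m - i) m, m.choose (m - j) * q (m - j) i * L ^ j * x ^ i := by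
    intro i
    have hsub : Icc (m - i) m ⊆ range (m + 1) := fun j hj => by
      simp only [mem_Icc, mem_range] at hj ⊢; omega
    rw [← sum_range_reflect, ← sum_subset hsub fun j hj hji => ?_]
    · refine sum_congr rfl fun j hj => ?_
      simp only [mem_Icc] at hj
      rw [show m + 1 - 1 - j = m - j by omega, Nat.sub_sub_self hj.2]; ring
    · simp only [mem_range, mem_Icc, not_and, not_le] at hj hji
      rw [hq _ _ (by omega)]; ring
  rw [sum_congr rfl fun k _ => mul_sum .., sum_comm, sum_congr rfl fun i _ => hcol i,
    range_eq_Ico, sum_eq_sum_Ico_succ_bot (by omega : 0 < K + 1), zero_add,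
    Ico_add_one_right_eq_Icc]
  simp

lemma log_add_one_pow_div_eq {t : ℝ} (ht : 0 < t) (m ℓ : ℕ) :
    Real.log (t + 1) ^ m / (t + 1) ^ ℓ
      = t⁻¹ ^ ℓ * ∑ k ∈ range (m + 1),
          m.choose k * Real.log t ^ (m - k) * (Real.log (1 + t⁻¹) ^ k * (1 + t⁻¹)⁻¹ ^ ℓ) := by
  have hsplit : t + 1 = t * (1 + t⁻¹) := by field_simp
  rw [hsplit, Real.log_mul ht.ne' (by positivity), add_comm, add_pow, div_eq_mul_inv, sum_mul,
    mul_sum]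
  refine sum_congr rfl fun k _ => ?_
  rw [mul_pow, mul_inv, inv_pow, inv_pow]
  ring

lemma log_add_one_pow_div_sub_eq {t : ℝ} (ht : 0 < t) (m ℓ K : ℕ) (q : ℕ → ℕ → ℝ)
    (hq : ∀ k i, i < k → q k i = 0) (hq₀ : q 0 0 = 1) :
    Real.log (t + 1) ^ m / (t + 1) ^ ℓ - (Real.log t ^ m / t ^ ℓ +
        ∑ i ∈ Icc 1 K, ∑ j ∈ Icc (m - i) m,
          m.choose (m - j) * q (m - j) i * Real.log t ^ j / t ^ (ℓ + i))
      = t⁻¹ ^ ℓ * ∑ k ∈ range (m + 1), m.choose k * Real.log t ^ (m - k) *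
          (Real.log (1 + t⁻¹) ^ k * (1 + t⁻¹)⁻¹ ^ ℓ - ∑ i ∈ range (K + 1), q k i * t⁻¹ ^ i) := by
  simp only [mul_sub, sum_sub_distrib]
  rw [← log_add_one_pow_div_eq ht, sum_choose_mul_sum_eq m K q hq, hq₀, one_mul,
    mul_add, mul_sum]
  congr 2
  · rw [div_eq_mul_inv, inv_pow, mul_comm]
  · refine sum_congr rfl fun i _ => ?_
    rw [mul_sum]
    refine sum_congr rfl fun j _ => ?_
    rw [pow_add, inv_pow, inv_pow]
    ring

noncomputable def logPowMulInvPowCoeff (K ℓ k i : ℕ) : ℝ :=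
  (logOneAddTaylor K ^ k * invOneAddTaylor K ^ ℓ).coeff i

lemma logPowMulInvPowCoeff_of_lt {K ℓ k i : ℕ} (h : i < k) : logPowMulInvPowCoeff K ℓ k i = 0 :=
  X_pow_dvd_iff.mp ((pow_dvd_pow_of_dvd (dvd_mul_right X _) k).mul_right _) i h

lemma logPowMulInvPowCoeff_zero_zero (K ℓ : ℕ) : logPowMulInvPowCoeff K ℓ 0 0 = 1 := by
  simp [logPowMulInvPowCoeff, coeff_zero_eq_eval_zero, invOneAddTaylor, eval_finsetSum,
    sum_range_succ']

lemma isBigO_log_one_add_pow_mul_inv_pow_sub (K ℓ k : ℕ) :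
    (fun n : ℕ => Real.log (1 + (n : ℝ)⁻¹) ^ k * (1 + (n : ℝ)⁻¹)⁻¹ ^ ℓ
        - ∑ i ∈ range (K + 1), logPowMulInvPowCoeff K ℓ k i * (n : ℝ)⁻¹ ^ i)
      =O[atTop] fun n => (n : ℝ)⁻¹ ^ (K + 1) :=
  (((isTaylorApprox_log_one_add K).pow k).mul
    ((isTaylorApprox_inv_one_add K).pow ℓ)).sub_sum_coeff.comp_tendsto
      tendsto_inv_atTop_nhds_zero_nat

end LogPowerShift

open LogPowerShift in
/-- For integers `p > ℓ ≥ 0` and `m ≥ 0`, there are constants `c i j` such that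
`(log(n+1))^m/(n+1)^ℓ = (log n)^m/n^ℓ + ∑_{i=1}^{p−ℓ} ∑_{j=max(m−i,0)}^{m} c i j (log n)^j/n^{ℓ+i}
+ O((log n)^m / n^{p+1})` as `n → ∞`. -/
theorem log_power_shift_expansion (p ℓ m : ℕ) (hp : ℓ < p) :
    ∃ c : ℕ → ℕ → ℝ,
      (fun n : ℕ =>
          (Real.log (n + 1)) ^ m / (n + 1 : ℝ) ^ ℓ -
            ((Real.log n) ^ m / (n : ℝ) ^ ℓ +
              ∑ i ∈ Finset.Icc 1 (p - ℓ), ∑ j ∈ Finset.Icc (m - i) m,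
                c i j * (Real.log n) ^ j / (n : ℝ) ^ (ℓ + i)))
        =O[atTop] fun n : ℕ => (Real.log n) ^ m / (n : ℝ) ^ (p + 1) := by
  set K := p - ℓ
  refine ⟨fun i j => m.choose (m - j) * logPowMulInvPowCoeff K ℓ (m - j) i, ?_⟩
  have hlog := Real.tendsto_log_atTop.comp tendsto_natCast_atTop_atTop
  have hsum := IsBigO.fun_sum (s := range (m + 1)) fun k _ =>
    ((isBigO_pow_pow_of_tendsto_atTop hlog (Nat.sub_le m k)).const_mul_left (m.choose k : ℝ)).mul
      (isBigO_log_one_add_pow_mul_inv_pow_sub K ℓ k)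
  refine ((isBigO_refl (fun n : ℕ => (n : ℝ)⁻¹ ^ ℓ) atTop).mul hsum).congr' ?_ ?_
  · filter_upwards [eventually_gt_atTop 0] with n hn
    exact (log_add_one_pow_div_sub_eq (Nat.cast_pos.mpr hn) m ℓ K _
      (fun _ _ => logPowMulInvPowCoeff_of_lt) (logPowMulInvPowCoeff_zero_zero K ℓ)).symm
  · refine Eventually.of_forall fun n => ?_
    simp only [Function.comp_apply]
    rw [show p + 1 = ℓ + (K + 1) by omega, pow_add]
    ring
end

section
/- Singularity rigidity for periodic nonnegative generating functions: let Q(t) = ∑ q_n t^n be a power series with nonnegative real coefficients and finite positive radius of convergence r, and suppose there exist a 'renewal loop': an index ℓ ≥ 1 with q-structure as follows — there exists w > 0 such that Q_j(t) := the subseries of coefficients with indices ≡ j mod ℓ can be written as Q_j(t) = (1/(1 − w t^ℓ)) · F_j(t^ℓ/(1 − w t^ℓ)) for power series F_j with nonnegative coefficients (j = 0,…,ℓ−1). Then Q has no singularities t₀ with |t₀| = r other than the points r·e^{2πij/ℓ}, j = 0,…,ℓ−1. -/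
/-!
Split `Q` by residues modulo `ℓ`: on `|t| < r`, `Q(t) = ∑_{j < ℓ} t^j A_j(t^ℓ)` with
`A_j(s) = ∑_n q_{nℓ+j} sⁿ`, and the renewal identity reads `A_j(s) = (1 - ws)⁻¹ F_j(s / (1 - ws))`
for `0 ≤ s < R := r^ℓ`. Because `A_j` has nonnegative coefficients, the series `F_j(u)` converges
whenever `u (1 - wR) < R` (unless `A_j = 0`). Since `wR ≤ 1` and `|1 - ws| > 1 - wR` for every
`|s| ≤ R` other than `s = R`, the Möbius map `s ↦ s / (1 - ws)` sends such `s` into that region, so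
the right-hand side continues each `A_j` analytically to every `ζ ≠ R` with `|ζ| = R`. Finally
`t₀^ℓ ≠ R` exactly when `t₀` avoids the points `r e^{2πij/ℓ}`.
-/

open Real Complex Metric Filter Topology

section PowerSeries

variable {𝕜 : Type*}

theorem analyticAt_tsum_mul_pow [NontriviallyNormedField 𝕜] [CompleteSpace 𝕜] {a : ℕ → 𝕜}
    {u : ℝ} (hsum : Summable fun n => ‖a n‖ * u ^ n) {z : 𝕜} (hz : ‖z‖ < u) :
    AnalyticAt 𝕜 (fun z => ∑' n, a n * z ^ n) z := by
  lift u to NNReal using (norm_nonneg z).trans hz.le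
  set p := FormalMultilinearSeries.ofScalars 𝕜 a
  have hrad : (u : ENNReal) ≤ p.radius :=
    p.le_radius_of_summable (by simpa only [p, FormalMultilinearSeries.ofScalars_norm] using hsum)
  have hz' : z ∈ eball 0 p.radius := by
    rw [mem_eball, edist_zero_right]
    exact lt_of_lt_of_le (by exact_mod_cast hz) hrad
  have := (p.hasFPowerSeriesOnBall (pos_of_gt hz')).analyticAt_of_mem hz'
  rwa [show p.sum = fun z => ∑' n, a n * z ^ n from
    FormalMultilinearSeries.ofScalarsSum_eq_tsum a] at this

theorem Summable.comp_mul_add [NormedField 𝕜] [CompleteSpace 𝕜] {f : ℕ → 𝕜}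
    (hf : Summable f) {ℓ : ℕ} (hℓ : ℓ ≠ 0) (j : ℕ) : Summable fun n => f (n * ℓ + j) :=
  hf.comp_injective fun m n h => by simpa [hℓ] using h

theorem summable_comp_mul_add_mul_pow_pow [NormedField 𝕜] [CompleteSpace 𝕜] {a : ℕ → 𝕜} {y : 𝕜}
    (h : Summable fun n => a n * y ^ n) (hy : y ≠ 0) {ℓ : ℕ} (hℓ : ℓ ≠ 0) (j : ℕ) :
    Summable fun n => a (n * ℓ + j) * (y ^ ℓ) ^ n := by
  refine ((h.comp_mul_add hℓ j).mul_right (y ^ j)⁻¹).congr fun n => ?_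
  rw [pow_add, pow_mul', mul_assoc, mul_inv_cancel_right₀ (pow_ne_zero j hy)]

theorem tsum_mul_pow_eq_sum_fin [NormedField 𝕜] [CompleteSpace 𝕜] {a : ℕ → 𝕜} {z : 𝕜}
    (ℓ : ℕ) [NeZero ℓ] (h : Summable fun n => a n * z ^ n) :
    ∑' n, a n * z ^ n = ∑ j : Fin ℓ, z ^ (j : ℕ) * ∑' n, a (n * ℓ + j) * (z ^ ℓ) ^ n := by
  have hrow (j : Fin ℓ) : HasSum (fun n => a (n * ℓ + j) * z ^ (n * ℓ + j))
      (z ^ (j : ℕ) * ∑' n, a (n * ℓ + j) * (z ^ ℓ) ^ n) := by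
    rw [← tsum_mul_left]
    convert (h.comp_mul_add (NeZero.ne ℓ) j).hasSum using 1
    refine tsum_congr fun n => ?_
    rw [pow_add, pow_mul']
    ring
  let e : ℕ ≃ Fin ℓ × ℕ := (Nat.divModEquiv ℓ).trans (Equiv.prodComm _ _)
  have htot := e.symm.hasSum_iff.mpr h.hasSum
  exact (htot.prod_fiberwise hrow).unique (hasSum_fintype _)

end PowerSeries

theorem summable_comp_mul_add_mul_pow_of_lt_pow {a : ℕ → ℝ} {r : ℝ} (hr : 0 ≤ r)
    (hconv : ∀ x : ℝ, 0 ≤ x → x < r → Summable fun n => a n * x ^ n) {ℓ : ℕ} (hℓ : ℓ ≠ 0)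
    (j : ℕ) {t : ℝ} (ht : 0 < t) (htr : t < r ^ ℓ) :
    Summable fun n => a (n * ℓ + j) * t ^ n := by
  have hy : 0 < t ^ (ℓ : ℝ)⁻¹ := rpow_pos_of_pos ht _
  rw [← rpow_inv_natCast_pow ht.le hℓ] at htr ⊢
  exact summable_comp_mul_add_mul_pow_pow (hconv _ hy.le (lt_of_pow_lt_pow_left₀ ℓ hr htr))
    hy.ne' hℓ j

theorem exists_eq_mul_exp_of_pow_eq_pow {t c : ℂ} (hc : c ≠ 0) {ℓ : ℕ} (hℓ : ℓ ≠ 0)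
    (h : t ^ ℓ = c ^ ℓ) : ∃ j < ℓ, t = c * exp (2 * π * I * j / ℓ) := by
  have : NeZero ℓ := ⟨hℓ⟩
  have hroot : (t / c) ^ ℓ = 1 := by rw [div_pow, h, div_self (pow_ne_zero ℓ hc)]
  obtain ⟨j, hj, hjt⟩ := (isPrimitiveRoot_exp ℓ hℓ).eq_pow_of_pow_eq_one hroot
  refine ⟨j, hj, ?_⟩
  rw [← Complex.exp_nat_mul] at hjt
  rw [show 2 * π * I * j / ℓ = j * (2 * π * I / ℓ) by ring, hjt, mul_div_cancel₀ t hc]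

theorem one_sub_mul_lt_norm_one_sub_mul {w R : ℝ} (hw : 0 < w) {z : ℂ} (hz : ‖z‖ ≤ R)
    (hzR : z ≠ R) : 1 - w * R < ‖1 - w * z‖ := by
  have hre : z.re < R := by
    refine lt_of_le_of_ne ((re_le_norm z).trans hz) fun h => hzR ?_
    have hnorm : z.re = ‖z‖ := le_antisymm (re_le_norm z) (h ▸ hz)
    rw [← re_add_im z, (re_eq_norm.1 hnorm).2.symm, h]
    simp
  calc 1 - w * R < (1 - w * z).re := by simpa using mul_lt_mul_of_pos_left hre hw
    _ ≤ ‖1 - w * z‖ := re_le_norm _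

theorem norm_div_one_sub_mul_lt {w R : ℝ} (hw : 0 < w) (hwR : w * R ≤ 1) {z : ℂ}
    (hz : ‖z‖ ≤ R) (hzR : z ≠ R) :
    1 - w * z ≠ 0 ∧ ‖z / (1 - w * z)‖ * (1 - w * R) < R := by
  have hlt := one_sub_mul_lt_norm_one_sub_mul hw hz hzR
  have hpos : 0 < ‖1 - w * z‖ := by linarith
  have hR : 0 < R := lt_of_le_of_ne ((norm_nonneg z).trans hz) fun h => hzR <| by
    rw [← h, ofReal_zero, ← norm_le_zero_iff, h]; exact hz
  refine ⟨norm_pos_iff.1 hpos, ?_⟩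
  rw [norm_div, div_mul_eq_mul_div, div_lt_iff₀ hpos]
  calc ‖z‖ * (1 - w * R) ≤ R * (1 - w * R) := by gcongr
    _ < R * ‖1 - w * z‖ := by gcongr

theorem AnalyticOnNhd.eqOn_ball_of_eq_ofReal {f g : ℂ → ℂ} {R : ℝ} (hR : 0 < R)
    (hf : AnalyticOnNhd ℂ f (ball 0 R)) (hg : AnalyticOnNhd ℂ g (ball 0 R))
    (h : ∀ x : ℝ, 0 < x → x < R → f x = g x) : Set.EqOn f g (ball 0 R) := by
  refine hf.eqOn_of_preconnected_of_frequently_eq hg (convex_ball 0 R).isPreconnected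
    (mem_ball_self hR) ?_
  have hreal : Tendsto ofReal (𝓝[>] 0) (𝓝[≠] 0) :=
    tendsto_nhdsWithin_of_tendsto_nhds_of_eventually_within _
      (continuous_ofReal.tendsto' 0 0 ofReal_zero |>.mono_left nhdsWithin_le_nhds)
      (eventually_nhdsWithin_of_forall fun x hx => ofReal_ne_zero.2 (ne_of_gt hx))
  refine hreal.frequently (Eventually.frequently ?_)
  filter_upwards [Ioo_mem_nhdsGT hR] with x hx using h x hx.1 hx.2

section Renewal

variable {a F : ℕ → ℝ} {w R : ℝ}

noncomputable def renewalSum (w : ℝ) (F : ℕ → ℝ) (z : ℂ) : ℂ :=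
  (1 - w * z)⁻¹ * ∑' n, (F n : ℂ) * (z / (1 - w * z)) ^ n

theorem renewalSum_ofReal (w : ℝ) (F : ℕ → ℝ) (t : ℝ) :
    renewalSum w F t = ((1 - w * t)⁻¹ * ∑' n, F n * (t / (1 - w * t)) ^ n : ℝ) := by
  simp [renewalSum, ofReal_tsum]

theorem mul_le_one_of_forall_mul_lt_one (hw : 0 < w) (h : ∀ t, 0 ≤ t → t < R → w * t < 1) :
    w * R ≤ 1 := by
  by_contra! hR
  have := h w⁻¹ (inv_nonneg.2 hw.le) ((inv_lt_iff_one_lt_mul₀' hw).2 hR)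
  rw [mul_inv_cancel₀ hw.ne'] at this
  exact lt_irrefl 1 this

/-- If the series of `F` diverged at `u > 0`, its `tsum` would be `0` and the renewal identity at
`t = u / (1 + wu)` would force the nonnegative series of `a` to vanish there. -/
theorem summable_of_renewal (ha : ∀ n, 0 ≤ a n) (hw : 0 < w)
    (hsum : ∀ t, 0 < t → t < R → Summable fun n => a n * t ^ n)
    (hid : ∀ t, 0 ≤ t → t < R → w * t < 1 ∧
      ∑' n, a n * t ^ n = (1 - w * t)⁻¹ * ∑' n, F n * (t / (1 - w * t)) ^ n)
    (hne : ∃ n, a n ≠ 0) {u : ℝ} (hu : 0 < u) (huR : u * (1 - w * R) < R) :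
    Summable fun n => F n * u ^ n := by
  obtain ⟨n₀, hn₀⟩ := hne
  have hden : 0 < 1 + w * u := by positivity
  set t := u / (1 + w * u)
  have ht : 0 < t := div_pos hu hden
  have htR : t < R := by rw [div_lt_iff₀ hden]; linarith
  have hu_eq : t / (1 - w * t) = u := by
    simp only [t]
    field_simp
    ring
  by_contra hdiv
  have hzero := (hid t ht.le htR).2
  rw [hu_eq, tsum_eq_zero_of_not_summable hdiv, mul_zero] at hzero
  have hpos : 0 < ∑' n, a n * t ^ n :=
    (hsum t ht htR).tsum_pos (fun n => mul_nonneg (ha n) (pow_nonneg ht.le n)) n₀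
      (mul_pos ((ha n₀).lt_of_ne' hn₀) (pow_pos ht n₀))
  exact hpos.ne' hzero

theorem analyticAt_renewalSum (hF : ∀ n, 0 ≤ F n)
    (hFsum : ∀ u, 0 < u → u * (1 - w * R) < R → Summable fun n => F n * u ^ n) {z : ℂ}
    (hz₁ : 1 - w * z ≠ 0) (hz : ‖z / (1 - w * z)‖ * (1 - w * R) < R) :
    AnalyticAt ℂ (renewalSum w F) z := by
  have hev : ∀ᶠ u in 𝓝[>] ‖z / (1 - w * z)‖, u * (1 - w * R) < R :=
    nhdsWithin_le_nhds <| (isOpen_lt (by fun_prop) (by fun_prop)).mem_nhds hz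
  obtain ⟨u, huR, hvu⟩ := (hev.and self_mem_nhdsWithin).exists
  have hFu : Summable fun n => ‖(F n : ℂ)‖ * u ^ n :=
    (hFsum u ((norm_nonneg _).trans_lt hvu) huR).congr fun n => by
      rw [norm_real, norm_of_nonneg (hF n)]
  have hden : AnalyticAt ℂ (fun v : ℂ => 1 - w * v) z := by fun_prop
  have hmob : AnalyticAt ℂ (fun v : ℂ => v / (1 - w * v)) z := analyticAt_id.div hden hz₁
  exact (hden.inv hz₁).mul ((analyticAt_tsum_mul_pow hFu hvu).comp_of_eq hmob rfl)

theorem exists_analyticAt_eq_tsum_of_renewal (ha : ∀ n, 0 ≤ a n) (hF : ∀ n, 0 ≤ F n)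
    (hw : 0 < w) (hR : 0 < R) (hsum : ∀ t, 0 < t → t < R → Summable fun n => a n * t ^ n)
    (hid : ∀ t, 0 ≤ t → t < R → w * t < 1 ∧
      ∑' n, a n * t ^ n = (1 - w * t)⁻¹ * ∑' n, F n * (t / (1 - w * t)) ^ n)
    {ζ : ℂ} (hζ : ‖ζ‖ ≤ R) (hζR : ζ ≠ R) :
    ∃ G : ℂ → ℂ, AnalyticAt ℂ G ζ ∧ ∀ z : ℂ, ‖z‖ < R → G z = ∑' n, (a n : ℂ) * z ^ n := by
  by_cases ha0 : ∀ n, a n = 0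
  · exact ⟨0, analyticAt_const, fun z _ => by simp [ha0]⟩
  have hwR := mul_le_one_of_forall_mul_lt_one hw fun t ht htR => (hid t ht htR).1
  have hFsum := fun u => summable_of_renewal ha hw hsum hid (not_forall.1 ha0) (u := u)
  have hG : ∀ z : ℂ, ‖z‖ ≤ R → z ≠ R → AnalyticAt ℂ (renewalSum w F) z := fun z hz hzR =>
    have ⟨hz₁, hz₂⟩ := norm_div_one_sub_mul_lt hw hwR hz hzR
    analyticAt_renewalSum hF hFsum hz₁ hz₂
  have hA : AnalyticOnNhd ℂ (fun z => ∑' n, (a n : ℂ) * z ^ n) (ball 0 R) := fun z hz => by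
    rw [mem_ball_zero_iff] at hz
    refine analyticAt_tsum_mul_pow (u := (‖z‖ + R) / 2) ?_ (by linarith)
    refine (hsum ((‖z‖ + R) / 2) (by positivity) (by linarith)).congr fun n => ?_
    rw [norm_real, norm_of_nonneg (ha n)]
  refine ⟨renewalSum w F, hG ζ hζ hζR, fun z hz => ?_⟩
  refine (hA.eqOn_ball_of_eq_ofReal hR (fun v hv => hG v ?_ ?_) (fun x hx hxR => ?_)
    (mem_ball_zero_iff.2 hz)).symm
  · exact (mem_ball_zero_iff.1 hv).le
  · rintro rfl
    simp [abs_of_pos hR] at hv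
  · rw [renewalSum_ofReal, ← (hid x hx.le hxR).2, ofReal_tsum]
    push_cast
    rfl

end Renewal

theorem renewal_loop_singularities_general (q : ℕ → ℝ) (hq : ∀ n, 0 ≤ q n) (r : ℝ) (hr : 0 < r)
    (hconv : ∀ x : ℝ, 0 ≤ x → x < r → Summable fun n => q n * x ^ n)
    (ℓ : ℕ) (hℓ : 1 ≤ ℓ) (w : ℝ) (hw : 0 < w)
    (hrenew : ∀ j < ℓ, ∃ F : ℕ → ℝ, (∀ n, 0 ≤ F n) ∧
      ∀ t : ℝ, 0 ≤ t → t < r ^ ℓ → w * t < 1 ∧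
        ∑' n : ℕ, q (n * ℓ + j) * t ^ n
          = (1 - w * t)⁻¹ * ∑' n : ℕ, F n * (t / (1 - w * t)) ^ n) :
    ∀ t₀ : ℂ, ‖t₀‖ = r →
      (∀ j < ℓ, t₀ ≠ (r : ℂ) * Complex.exp (2 * (π : ℂ) * Complex.I * j / ℓ)) →
      ∃ g : ℂ → ℂ, AnalyticAt ℂ g t₀ ∧
        ∀ z : ℂ, ‖z‖ < r → g z = ∑' n : ℕ, (q n : ℂ) * z ^ n := by
  intro t₀ ht₀ hroot
  have hℓ0 : ℓ ≠ 0 := by omega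
  have : NeZero ℓ := ⟨hℓ0⟩
  have hζ : ‖t₀ ^ ℓ‖ ≤ r ^ ℓ := norm_pow t₀ ℓ ▸ ht₀ ▸ le_rfl
  have hζR : t₀ ^ ℓ ≠ ((r ^ ℓ : ℝ) : ℂ) := fun h => by
    obtain ⟨j, hj, rfl⟩ := exists_eq_mul_exp_of_pow_eq_pow (ofReal_ne_zero.2 hr.ne') hℓ0
      (by rw [h, ofReal_pow])
    exact hroot j hj rfl
  have hG (j : Fin ℓ) : ∃ G : ℂ → ℂ, AnalyticAt ℂ G (t₀ ^ ℓ) ∧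
      ∀ z : ℂ, ‖z‖ < r ^ ℓ → G z = ∑' n, (q (n * ℓ + j) : ℂ) * z ^ n := by
    obtain ⟨F, hF, hid⟩ := hrenew j j.2
    exact exists_analyticAt_eq_tsum_of_renewal (fun n => hq _) hF hw (pow_pos hr ℓ)
      (fun t => summable_comp_mul_add_mul_pow_of_lt_pow hr.le hconv hℓ0 j) hid hζ hζR
  choose G hGan hGeq using hG
  refine ⟨fun z => ∑ j : Fin ℓ, z ^ (j : ℕ) * G j (z ^ ℓ), ?_, fun z hz => ?_⟩
  · exact Finset.analyticAt_fun_sum _ fun j _ =>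
      (analyticAt_id.pow _).mul ((hGan j).comp_of_eq (analyticAt_id.pow ℓ) rfl)
  · have hsum : Summable fun n => (q n : ℂ) * z ^ n :=
      .of_norm_bounded (hconv ‖z‖ (norm_nonneg z) hz) fun n => by
        rw [norm_mul, norm_pow, norm_real, norm_of_nonneg (hq n)]
    have hzℓ : ‖z ^ ℓ‖ < r ^ ℓ := by rw [norm_pow]; gcongr
    rw [tsum_mul_pow_eq_sum_fin ℓ hsum]
    exact Finset.sum_congr rfl fun j _ => by rw [hGeq j _ hzℓ]

/-- Singularity rigidity for periodic nonnegative generating functions with a renewal loop: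
if `Q(t) = ∑ q_n tⁿ` has nonnegative coefficients and radius of convergence `r`, and each
congruence-class subseries `Q_j(t) = ∑_n q_{nℓ+j} tⁿ` can be written as
`(1/(1−wt))·F_j(t/(1−wt))` with `F_j` having nonnegative coefficients, then `Q` extends
analytically to every point of the circle `|t| = r` other than `r·e^{2πij/ℓ}`. -/
theorem renewal_loop_singularities (q : ℕ → ℝ) (hq : ∀ n, 0 ≤ q n) (r : ℝ) (hr : 0 < r)
    (hconv : ∀ x : ℝ, 0 ≤ x → x < r → Summable fun n => q n * x ^ n)
    (hdiv : ∀ x : ℝ, r < x → ¬ Summable fun n => q n * x ^ n)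
    (ℓ : ℕ) (hℓ : 1 ≤ ℓ) (w : ℝ) (hw : 0 < w)
    (hrenew : ∀ j < ℓ, ∃ F : ℕ → ℝ, (∀ n, 0 ≤ F n) ∧
      ∀ t : ℝ, 0 ≤ t → t < r ^ ℓ → w * t < 1 ∧
        ∑' n : ℕ, q (n * ℓ + j) * t ^ n
          = (1 - w * t)⁻¹ * ∑' n : ℕ, F n * (t / (1 - w * t)) ^ n) :
    ∀ t₀ : ℂ, ‖t₀‖ = r →
      (∀ j < ℓ, t₀ ≠ (r : ℂ) * Complex.exp (2 * (π : ℂ) * Complex.I * j / ℓ)) →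
      ∃ g : ℂ → ℂ, AnalyticAt ℂ g t₀ ∧
        ∀ z : ℂ, ‖z‖ < r → g z = ∑' n : ℕ, (q n : ℂ) * z ^ n :=
  renewal_loop_singularities_general q hq r hr hconv ℓ hℓ w hw hrenew
end
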